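/- Let P be a probability distribution over the eighteen binary variables (a1,a2,a3,b1,b2,b3,c1,c2,c3,x1,x2,y1,y2,z1,z2,λ_A,λ_B,λ_C), writing x⃗=(x1,x2), y⃗=(y1,y2), z⃗=(z1,z2), 𝟎=(0,0), 𝟏=(1,1). Suppose P(x⃗,y⃗,z⃗) > 0 for all values of the inputs and (λ_A,b3,c3) ⫫_P x⃗ | (y⃗,z⃗). Then P(a1⊕b3⊕c3 = 1 | x⃗=𝟏, y⃗=𝟎, z⃗=𝟎) + P(a1 = λ_A | x⃗=𝟏, y⃗=𝟎, z⃗=𝟎) ≤ P(λ_A⊕b3⊕c3 = 1 | x⃗=𝟎, y⃗=𝟎, z⃗=𝟎) + 1, where ⊕ denotes addition mod 2. -/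

import Mathlib

set_option synthInstance.maxSize 100000
set_option maxHeartbeats 1000000

/-- The nine binary outcome variables. -/
structure Outcome where
  a1 : Bool
  a2 : Bool
  a3 : Bool
  b1 : Bool
  b2 : Bool
  b3 : Bool
  c1 : Bool
  c2 : Bool
  c3 : Bool
deriving DecidableEq, Fintype

/-- The six binary input variables `x⃗ = (x1,x2)`, `y⃗ = (y1,y2)`, `z⃗ = (z1,z2)`. -/
structure Inputs where
  x1 : Bool
  x2 : Bool
  y1 : Bool
  y2 : Bool
  z1 : Bool
  z2 : Bool
deriving DecidableEq, Fintype

/-- The three binary hidden causal order variables `λ_A, λ_B, λ_C`. -/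
structure Lams where
  lA : Bool
  lB : Bool
  lC : Bool
deriving DecidableEq, Fintype

/-- The probability of the event `E` under the distribution `P`. -/
def pr (P : Outcome → Inputs → Lams → ℝ) (E : Outcome → Inputs → Lams → Prop)
    [∀ o i l, Decidable (E o i l)] : ℝ :=
  ∑ o : Outcome, ∑ i : Inputs, ∑ l : Lams, if E o i l then P o i l else 0

/-- The conditional probability `P(E | F) = P(E ∧ F) / P(F)`. -/
noncomputable def cpr (P : Outcome → Inputs → Lams → ℝ) (E F : Outcome → Inputs → Lams → Prop)
    [∀ o i l, Decidable (E o i l)] [∀ o i l, Decidable (F o i l)] : ℝ :=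
  pr P (fun o i l => E o i l ∧ F o i l) / pr P F

/-!
Conditioned on `y⃗ = z⃗ = 𝟎`, the independence hypothesis makes the law of `(λ_A, b3, c3)`, hence
that of `λ_A ⊕ b3 ⊕ c3`, the same under `x⃗ = 𝟏` and under `x⃗ = 𝟎`. Under `x⃗ = 𝟏` the events
`a1 ⊕ b3 ⊕ c3 = 1` and `a1 = λ_A` together force `λ_A ⊕ b3 ⊕ c3 = 1`, so the inequality is the
bound `P(E) + P(G) ≤ P(E ∧ G) + 1`.
-/

section Events

variable (P : Outcome → Inputs → Lams → ℝ)

lemma pr_congr {E F : Outcome → Inputs → Lams → Prop}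
    [∀ o i l, Decidable (E o i l)] [∀ o i l, Decidable (F o i l)]
    (h : ∀ o i l, E o i l ↔ F o i l) : pr P E = pr P F := by
  simp only [pr, h]

lemma pr_nonneg (hnn : ∀ o i l, 0 ≤ P o i l) (E : Outcome → Inputs → Lams → Prop)
    [∀ o i l, Decidable (E o i l)] : 0 ≤ pr P E :=
  Finset.sum_nonneg fun o _ => Finset.sum_nonneg fun i _ => Finset.sum_nonneg fun l _ => by
    split_ifs
    exacts [hnn o i l, le_rfl]

lemma pr_mono (hnn : ∀ o i l, 0 ≤ P o i l) {E F : Outcome → Inputs → Lams → Prop}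
    [∀ o i l, Decidable (E o i l)] [∀ o i l, Decidable (F o i l)]
    (h : ∀ o i l, E o i l → F o i l) : pr P E ≤ pr P F := by
  unfold pr
  gcongr with o _ i _ l _
  split_ifs with hE hF hF
  exacts [le_rfl, absurd (h o i l hE) hF, hnn o i l, le_rfl]

lemma pr_add_pr (E F : Outcome → Inputs → Lams → Prop)
    [∀ o i l, Decidable (E o i l)] [∀ o i l, Decidable (F o i l)] :
    pr P E + pr P F
      = pr P (fun o i l => E o i l ∧ F o i l) + pr P (fun o i l => E o i l ∨ F o i l) := by
  simp only [pr, ← Finset.sum_add_distrib]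
  refine Finset.sum_congr rfl fun o _ => Finset.sum_congr rfl fun i _ =>
    Finset.sum_congr rfl fun l _ => ?_
  by_cases hE : E o i l <;> by_cases hF : F o i l <;> simp [hE, hF]

lemma pr_comp_and_eq_sum {β : Type*} [Fintype β] [DecidableEq β]
    (g : Outcome → Inputs → Lams → β) (S : β → Prop) [DecidablePred S]
    (F : Outcome → Inputs → Lams → Prop) [∀ o i l, Decidable (F o i l)] :
    pr P (fun o i l => S (g o i l) ∧ F o i l)
      = ∑ v ∈ Finset.univ.filter S, pr P (fun o i l => g o i l = v ∧ F o i l) := by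
  simp only [pr]
  conv_rhs => rw [Finset.sum_comm]
  refine Finset.sum_congr rfl fun o _ => ?_
  conv_rhs => rw [Finset.sum_comm]
  refine Finset.sum_congr rfl fun i _ => ?_
  conv_rhs => rw [Finset.sum_comm]
  refine Finset.sum_congr rfl fun l _ => ?_
  simp [ite_and]

lemma cpr_mono (hnn : ∀ o i l, 0 ≤ P o i l) {E G : Outcome → Inputs → Lams → Prop}
    (F : Outcome → Inputs → Lams → Prop) [∀ o i l, Decidable (E o i l)]
    [∀ o i l, Decidable (G o i l)] [∀ o i l, Decidable (F o i l)]
    (h : ∀ o i l, E o i l → G o i l) : cpr P E F ≤ cpr P G F :=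
  div_le_div_of_nonneg_right (pr_mono P hnn fun o i l ⟨hE, hF⟩ => ⟨h o i l hE, hF⟩)
    (pr_nonneg P hnn F)

lemma cpr_add_cpr_le (hnn : ∀ o i l, 0 ≤ P o i l) (E G F : Outcome → Inputs → Lams → Prop)
    [∀ o i l, Decidable (E o i l)] [∀ o i l, Decidable (G o i l)]
    [∀ o i l, Decidable (F o i l)] (hF : 0 < pr P F) :
    cpr P E F + cpr P G F ≤ cpr P (fun o i l => E o i l ∧ G o i l) F + 1 := by
  rw [cpr, cpr, cpr, ← add_div, div_add_one hF.ne', div_le_div_iff_of_pos_right hF, pr_add_pr,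
    pr_congr P fun o i l => show ((E o i l ∧ F o i l) ∧ G o i l ∧ F o i l) ↔
      (E o i l ∧ G o i l) ∧ F o i l by tauto]
  gcongr
  exact pr_mono P hnn fun o i l h => h.elim And.right And.right

lemma cpr_comp_eq_of_cpr_eq {β : Type*} [Fintype β] [DecidableEq β]
    (g : Outcome → Inputs → Lams → β) (S : β → Prop) [DecidablePred S]
    {F₀ F₁ : Outcome → Inputs → Lams → Prop}
    [∀ o i l, Decidable (F₀ o i l)] [∀ o i l, Decidable (F₁ o i l)]
    (h₀ : 0 < pr P F₀) (h₁ : 0 < pr P F₁)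
    (h : ∀ v, cpr P (fun o i l => g o i l = v) F₀ = cpr P (fun o i l => g o i l = v) F₁) :
    cpr P (fun o i l => S (g o i l)) F₀ = cpr P (fun o i l => S (g o i l)) F₁ := by
  simp only [cpr, div_eq_div_iff h₀.ne' h₁.ne'] at h ⊢
  rw [pr_comp_and_eq_sum, pr_comp_and_eq_sum, Finset.sum_mul, Finset.sum_mul]
  exact Finset.sum_congr rfl fun v _ => h v

end Events

/-- `(λ_A, b3, c3) ⫫ x⃗ | (y⃗, z⃗)`. -/
def RelCausalityX (P : Outcome → Inputs → Lams → ℝ) : Prop :=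
  ∀ lAv b3v c3v x1v x2v y1v y2v z1v z2v : Bool,
    pr P (fun o i l => l.lA = lAv ∧ o.b3 = b3v ∧ o.c3 = c3v ∧
          i.x1 = x1v ∧ i.x2 = x2v ∧ i.y1 = y1v ∧ i.y2 = y2v ∧ i.z1 = z1v ∧ i.z2 = z2v)
        * pr P (fun _ i _ => i.y1 = y1v ∧ i.y2 = y2v ∧ i.z1 = z1v ∧ i.z2 = z2v)
      = pr P (fun o i l => l.lA = lAv ∧ o.b3 = b3v ∧ o.c3 = c3v ∧
          i.y1 = y1v ∧ i.y2 = y2v ∧ i.z1 = z1v ∧ i.z2 = z2v)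
        * pr P (fun _ i _ => i.x1 = x1v ∧ i.x2 = x2v ∧
          i.y1 = y1v ∧ i.y2 = y2v ∧ i.z1 = z1v ∧ i.z2 = z2v)

lemma RelCausalityX.cpr_eq {P : Outcome → Inputs → Lams → ℝ} (hnn : ∀ o i l, 0 ≤ P o i l)
    (h : RelCausalityX P) (x1 x2 x1' x2' y1 y2 z1 z2 : Bool)
    (h₀ : 0 < pr P (fun _ i _ => i = ⟨x1, x2, y1, y2, z1, z2⟩))
    (h₁ : 0 < pr P (fun _ i _ => i = ⟨x1', x2', y1, y2, z1, z2⟩)) (v : Bool × Bool × Bool) :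
    cpr P (fun o _ l => (l.lA, o.b3, o.c3) = v) (fun _ i _ => i = ⟨x1, x2, y1, y2, z1, z2⟩)
      = cpr P (fun o _ l => (l.lA, o.b3, o.c3) = v)
          (fun _ i _ => i = ⟨x1', x2', y1, y2, z1, z2⟩) := by
  obtain ⟨a, b, c⟩ := v
  have hyz : 0 < pr P (fun _ i _ => i.y1 = y1 ∧ i.y2 = y2 ∧ i.z1 = z1 ∧ i.z2 = z2) :=
    h₀.trans_le (pr_mono P hnn fun _ i _ hi => by simp [hi])
  have indep : ∀ x1 x2,
      pr P (fun o i l => (l.lA, o.b3, o.c3) = (a, b, c) ∧ i = ⟨x1, x2, y1, y2, z1, z2⟩)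
          * pr P (fun _ i _ => i.y1 = y1 ∧ i.y2 = y2 ∧ i.z1 = z1 ∧ i.z2 = z2)
        = pr P (fun o i l => l.lA = a ∧ o.b3 = b ∧ o.c3 = c ∧
            i.y1 = y1 ∧ i.y2 = y2 ∧ i.z1 = z1 ∧ i.z2 = z2)
          * pr P (fun _ i _ => i = ⟨x1, x2, y1, y2, z1, z2⟩) := fun x1 x2 => by
    convert h a b c x1 x2 y1 y2 z1 z2 using 2 <;>
      exact pr_congr P fun o i l => by cases i; simp [and_assoc]
  rw [cpr, cpr, div_eq_div_iff h₀.ne' h₁.ne']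
  apply mul_right_cancel₀ hyz.ne'
  linear_combination pr P (fun _ i _ => i = ⟨x1', x2', y1, y2, z1, z2⟩) * indep x1 x2
    - pr P (fun _ i _ => i = ⟨x1, x2, y1, y2, z1, z2⟩) * indep x1' x2'

theorem stmt8_general (P : Outcome → Inputs → Lams → ℝ)
    -- `P` is a probability distribution
    (hnn : ∀ o i l, 0 ≤ P o i l)
    -- all inputs have positive probability
    (hin : ∀ iv : Inputs, 0 < pr P (fun _ i _ => i = iv))
    -- relativistic causality: `(λ_A, b3, c3) ⫫ x⃗ | (y⃗, z⃗)`
    (hRCx : ∀ lAv b3v c3v x1v x2v y1v y2v z1v z2v : Bool,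
      pr P (fun o i l => l.lA = lAv ∧ o.b3 = b3v ∧ o.c3 = c3v ∧
            i.x1 = x1v ∧ i.x2 = x2v ∧ i.y1 = y1v ∧ i.y2 = y2v ∧ i.z1 = z1v ∧ i.z2 = z2v)
          * pr P (fun _ i _ => i.y1 = y1v ∧ i.y2 = y2v ∧ i.z1 = z1v ∧ i.z2 = z2v)
        = pr P (fun o i l => l.lA = lAv ∧ o.b3 = b3v ∧ o.c3 = c3v ∧
            i.y1 = y1v ∧ i.y2 = y2v ∧ i.z1 = z1v ∧ i.z2 = z2v)
          * pr P (fun _ i _ => i.x1 = x1v ∧ i.x2 = x2v ∧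
            i.y1 = y1v ∧ i.y2 = y2v ∧ i.z1 = z1v ∧ i.z2 = z2v)) :
    cpr P (fun o _ _ => Bool.xor o.a1 (Bool.xor o.b3 o.c3) = true)
        (fun _ i _ => i = ⟨true, true, false, false, false, false⟩)
      + cpr P (fun o _ l => o.a1 = l.lA)
        (fun _ i _ => i = ⟨true, true, false, false, false, false⟩)
      ≤ cpr P (fun o _ l => Bool.xor l.lA (Bool.xor o.b3 o.c3) = true)
        (fun _ i _ => i = ⟨false, false, false, false, false, false⟩) + 1 := by
  have h₁ := hin ⟨true, true, false, false, false, false⟩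
  have h₀ := hin ⟨false, false, false, false, false, false⟩
  have hxor := cpr_comp_eq_of_cpr_eq P (fun o _ l => (l.lA, o.b3, o.c3))
    (fun v => Bool.xor v.1 (Bool.xor v.2.1 v.2.2) = true) h₁ h₀
    (RelCausalityX.cpr_eq hnn hRCx true true false false false false false false h₁ h₀)
  calc _ ≤ cpr P (fun o _ l => Bool.xor o.a1 (Bool.xor o.b3 o.c3) = true ∧ o.a1 = l.lA)
          (fun _ i _ => i = ⟨true, true, false, false, false, false⟩) + 1 :=
        cpr_add_cpr_le P hnn _ _ _ h₁
    _ ≤ cpr P (fun o _ l => Bool.xor l.lA (Bool.xor o.b3 o.c3) = true)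
          (fun _ i _ => i = ⟨true, true, false, false, false, false⟩) + 1 := by
        gcongr 1
        exact cpr_mono P hnn _ fun o _ l ⟨hodd, hA⟩ => hA ▸ hodd
    _ = _ := by rw [← hxor]

/-- Under positivity of the inputs and the relativistic causality
condition `(λ_A, b3, c3) ⫫ x⃗ | (y⃗, z⃗)`, one has
`P(a1⊕b3⊕c3 = 1 | x⃗=𝟏, y⃗=𝟎, z⃗=𝟎) + P(a1 = λ_A | x⃗=𝟏, y⃗=𝟎, z⃗=𝟎)
  ≤ P(λ_A⊕b3⊕c3 = 1 | x⃗=𝟎, y⃗=𝟎, z⃗=𝟎) + 1`. -/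
theorem stmt8 (P : Outcome → Inputs → Lams → ℝ)
    -- `P` is a probability distribution
    (hnn : ∀ o i l, 0 ≤ P o i l)
    (hsum : (∑ o : Outcome, ∑ i : Inputs, ∑ l : Lams, P o i l) = 1)
    -- all inputs have positive probability
    (hin : ∀ iv : Inputs, 0 < pr P (fun _ i _ => i = iv))
    -- relativistic causality: `(λ_A, b3, c3) ⫫ x⃗ | (y⃗, z⃗)`
    (hRCx : ∀ lAv b3v c3v x1v x2v y1v y2v z1v z2v : Bool,
      pr P (fun o i l => l.lA = lAv ∧ o.b3 = b3v ∧ o.c3 = c3v ∧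
            i.x1 = x1v ∧ i.x2 = x2v ∧ i.y1 = y1v ∧ i.y2 = y2v ∧ i.z1 = z1v ∧ i.z2 = z2v)
          * pr P (fun _ i _ => i.y1 = y1v ∧ i.y2 = y2v ∧ i.z1 = z1v ∧ i.z2 = z2v)
        = pr P (fun o i l => l.lA = lAv ∧ o.b3 = b3v ∧ o.c3 = c3v ∧
            i.y1 = y1v ∧ i.y2 = y2v ∧ i.z1 = z1v ∧ i.z2 = z2v)
          * pr P (fun _ i _ => i.x1 = x1v ∧ i.x2 = x2v ∧
            i.y1 = y1v ∧ i.y2 = y2v ∧ i.z1 = z1v ∧ i.z2 = z2v)) :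
    cpr P (fun o _ _ => Bool.xor o.a1 (Bool.xor o.b3 o.c3) = true)
        (fun _ i _ => i = ⟨true, true, false, false, false, false⟩)
      + cpr P (fun o _ l => o.a1 = l.lA)
        (fun _ i _ => i = ⟨true, true, false, false, false, false⟩)
      ≤ cpr P (fun o _ l => Bool.xor l.lA (Bool.xor o.b3 o.c3) = true)
        (fun _ i _ => i = ⟨false, false, false, false, false, false⟩) + 1 :=
  stmt8_general P hnn hin hRCx
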